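/- Let Λ be a string algebra, v a vertex, and suppose the left N-string ⟨1 l⟩(x₀) = lim_{n→∞} l^n(x₀) exists and is eventually periodic of the form ∞b u x₀ for some string u and band b. Then b is a prime band. -/

import Mathlib

/-- A quiver with a set of monomial relations, presenting a string algebra. -/
structure SAQuiver where
  V : Type
  A : Type
  src : A → V
  tgt : A → V
  rel : Set (List A)

namespace SA

variable (S : SAQuiver)

/-- A syllable: a direct arrow (`Sum.inl`) or the formal inverse of an arrow (`Sum.inr`). -/
abbrev Syl := S.A ⊕ S.A

/-- A word of syllables, listed in order of traversal (the head is the first,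
i.e. rightmost, syllable in the usual right-to-left notation `αₙ…α₁`). -/
abbrev Word := List (Syl S)

def sylSrc : Syl S → S.V
  | Sum.inl a => S.src a
  | Sum.inr a => S.tgt a

def sylTgt : Syl S → S.V
  | Sum.inl a => S.tgt a
  | Sum.inr a => S.src a

def sylInv : Syl S → Syl S
  | Sum.inl a => Sum.inr a
  | Sum.inr a => Sum.inl a

/-- Consecutive syllables compose as a walk. -/
def IsWalk : Word S → Prop
  | [] => True
  | [_] => True
  | x :: y :: l => sylTgt S x = sylSrc S y ∧ IsWalk (y :: l)

/-- No two consecutive syllables are inverse to each other. -/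
def Reduced : Word S → Prop
  | x :: y :: l => y ≠ sylInv S x ∧ Reduced (y :: l)
  | _ => True

/-- No subword is a relation or the inverse of a relation. -/
def AvoidsRel (w : Word S) : Prop :=
  ∀ p ∈ S.rel, ¬ ((p.map (Sum.inl : S.A → Syl S)) <:+: w) ∧
    ¬ ((p.map (Sum.inr : S.A → Syl S)).reverse <:+: w)

/-- A (finite, nonempty) string. -/
def IsStr (w : Word S) : Prop :=
  w ≠ [] ∧ IsWalk S w ∧ Reduced S w ∧ AvoidsRel S w

def wSrc : Word S → Option S.V
  | [] => none
  | x :: _ => some (sylSrc S x)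

def wTgt (w : Word S) : Option S.V := w.getLast?.map (sylTgt S)

/-- A cyclic word: its target equals its source. -/
def Cyclic (w : Word S) : Prop := w ≠ [] ∧ wSrc S w = wTgt S w

/-- The `n`-th power of a word under concatenation. -/
def pow (w : Word S) (n : ℕ) : Word S := (List.replicate n w).flatten

/-- A word containing both a direct and an inverse syllable. -/
def Mixed (w : Word S) : Prop := (∃ a, Sum.inl a ∈ w) ∧ (∃ a, Sum.inr a ∈ w)

/-- A word that is not a proper power of a shorter word. -/
def Primitive (w : Word S) : Prop := ¬ ∃ (u : Word S) (k : ℕ), 2 ≤ k ∧ w = pow S u k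

/-- A rotation (cyclic permutation) of a word. -/
def IsRotation (u w : Word S) : Prop := ∃ l₁ l₂ : Word S, w = l₁ ++ l₂ ∧ u = l₂ ++ l₁

/-- A band: a primitive mixed cyclic string, all of whose powers are strings, whose first
syllable is inverse and whose last syllable is direct. -/
def IsBand (w : Word S) : Prop :=
  IsStr S w ∧ Cyclic S w ∧ Primitive S w ∧
    (∃ a, w.head? = some (Sum.inr a)) ∧ (∃ a, w.getLast? = some (Sum.inl a)) ∧
    ∀ n : ℕ, 1 ≤ n → IsStr S (pow S w n)

/-- A cyclic permutation of a band. -/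
def RotOfBand (u : Word S) : Prop := ∃ b, IsBand S b ∧ IsRotation S u b

/-- A prime band: no cyclic permutation of it is a concatenation of two or more cyclic
permutations of bands. -/
def IsPrimeBand (w : Word S) : Prop :=
  IsBand S w ∧
    ¬ ∃ (w' : Word S) (parts : List (Word S)), IsRotation S w' w ∧ 2 ≤ parts.length ∧
        w' = parts.flatten ∧ ∀ p ∈ parts, RotOfBand S p

/-- A word containing no cyclic permutation of a band as a subword. -/
def BandFree (w : Word S) : Prop := ¬ ∃ u, RotOfBand S u ∧ u <:+: w

/-- A word all of whose syllables are direct. -/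
def DirectWord (w : Word S) : Prop := ∀ x ∈ w, ∃ a, x = Sum.inl a

/-- A word all of whose syllables are inverse. -/
def InverseWord (w : Word S) : Prop := ∀ x ∈ w, ∃ a, x = Sum.inr a

/-- A string which is a substring of a cyclic permutation of a band. -/
def Extendable (w : Word S) : Prop := ∃ u, RotOfBand S u ∧ w <:+: u

/-- The axioms for `(Q, ρ)` to present a string algebra. -/
def IsStringAlgebra : Prop :=
  Finite S.V ∧ Finite S.A ∧
  (∀ p ∈ S.rel, p ≠ [] ∧ IsWalk S (p.map (Sum.inl : S.A → Syl S))) ∧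
  {p : List S.A | p ≠ [] ∧ IsWalk S (p.map (Sum.inl : S.A → Syl S)) ∧
      ∀ q ∈ S.rel, ¬ (q <:+: p)}.Finite ∧
  (∀ v : S.V, ¬ ∃ a b c : S.A, a ≠ b ∧ b ≠ c ∧ a ≠ c ∧
      S.src a = v ∧ S.src b = v ∧ S.src c = v) ∧
  (∀ v : S.V, ¬ ∃ a b c : S.A, a ≠ b ∧ b ≠ c ∧ a ≠ c ∧
      S.tgt a = v ∧ S.tgt b = v ∧ S.tgt c = v) ∧
  (∀ b c₁ c₂ : S.A, c₁ ≠ c₂ → IsStr S [Sum.inl b, Sum.inl c₁] →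
      ¬ IsStr S [Sum.inl b, Sum.inl c₂]) ∧
  (∀ b a₁ a₂ : S.A, a₁ ≠ a₂ → IsStr S [Sum.inl a₁, Sum.inl b] →
      ¬ IsStr S [Sum.inl a₂, Sum.inl b])

end SA

namespace SA

variable (S : SAQuiver)

/-! ### Sign functions and hammocks -/

/-- `σ` of a syllable: `σ(a) = σ a`, `σ(B) = ε b`. -/
def sylSg (σ ε : S.A → ℤ) : Syl S → ℤ
  | Sum.inl a => σ a
  | Sum.inr a => ε a

/-- `ε` of a syllable: `ε(a) = ε a`, `ε(B) = σ b`. -/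
def sylEp (σ ε : S.A → ℤ) : Syl S → ℤ
  | Sum.inl a => ε a
  | Sum.inr a => σ a

/-- The conditions on the chosen sign maps `σ, ε : Q₁ → {±1}`. -/
def SignOK (σ ε : S.A → ℤ) : Prop :=
  (∀ a, σ a = 1 ∨ σ a = -1) ∧ (∀ a, ε a = 1 ∨ ε a = -1) ∧
  (∀ a b, a ≠ b → S.src a = S.src b → σ a = -σ b) ∧
  (∀ a b, a ≠ b → S.tgt a = S.tgt b → ε a = -ε b) ∧
  (∀ c b : S.A, IsStr S [Sum.inl c, Sum.inl b] → σ b = -ε c)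

/-- Membership in the hammock `H_r(v)`: strings ending at `v` with `ε`-value `1`;
the empty word stands for the lazy string `1_{(v,1)}`. -/
def HrMem (σ ε : S.A → ℤ) (v : S.V) (w : Word S) : Prop :=
  w = [] ∨ (IsStr S w ∧ wTgt S w = some v ∧
    ∃ s, w.getLast? = some s ∧ sylEp S σ ε s = 1)

/-- The order `<_r` on `H_r(v)`:  `u <_r v` iff `v = u a x`, or `u = v B y`, or
`v = z a x ∧ u = z B y`. -/
def ltr (u v : Word S) : Prop :=
  (∃ (a : S.A) (x : Word S), v = x ++ [Sum.inl a] ++ u) ∨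
  (∃ (b : S.A) (y : Word S), u = y ++ [Sum.inr b] ++ v) ∨
  (∃ (a b : S.A) (x y z : Word S),
      v = x ++ [Sum.inl a] ++ z ∧ u = y ++ [Sum.inr b] ++ z)

/-- The inverse of a word. -/
def wInv (w : Word S) : Word S := (w.map (sylInv S)).reverse

/-- Membership in the hammock `H_l(v)`: strings starting at `v` with `σ`-value `-1`;
the empty word stands for the lazy string `1_{(v,-1)}`'s role in `H_l(v)`. -/
def HlMem (σ ε : S.A → ℤ) (v : S.V) (w : Word S) : Prop :=
  w = [] ∨ (IsStr S w ∧ wSrc S w = some v ∧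
    ∃ s, w.head? = some s ∧ sylSg S σ ε s = -1)

/-- The order `<_l` on `H_l(v)`: `u <_l v` iff `v⁻¹ <_r u⁻¹`. -/
def ltl (u v : Word S) : Prop := ltr S (wInv S v) (wInv S u)

/-- `v` is the direct successor of `u` in the total order `lt` restricted to `P`. -/
def DirSucc (P : Word S → Prop) (lt : Word S → Word S → Prop) (u v : Word S) : Prop :=
  P u ∧ P v ∧ lt u v ∧ ¬ ∃ w, P w ∧ lt u w ∧ lt w v

/-- A finite interval (chain of consecutive elements) in a hammock whose length sequence is
monotone. -/
def MonoChain (P : Word S → Prop) (lt : Word S → Word S → Prop) (n : ℕ)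
    (c : ℕ → Word S) : Prop :=
  (∀ i < n, DirSucc S P lt (c i) (c (i + 1))) ∧
  ((∀ i < n, (c i).length < (c (i + 1)).length) ∨
   (∀ i < n, (c (i + 1)).length < (c i).length))

/-- Torsion-freeness for one hammock: every finite interval with monotone length sequence
extends (on one of its two ends) to a strictly larger such interval. -/
def TFfor (P : Word S → Prop) (lt : Word S → Word S → Prop) : Prop :=
  ∀ (n : ℕ) (c : ℕ → Word S), MonoChain S P lt n c →
    ∃ c' : ℕ → Word S, MonoChain S P lt (n + 1) c' ∧
      ((∀ i ≤ n, c' i = c i) ∨ (∀ i ≤ n, c' (i + 1) = c i))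

/-- A torsion-free string algebra: both the left and right hammock conditions hold at
every vertex. -/
def TorsionFree (σ ε : S.A → ℤ) : Prop :=
  (∀ v : S.V, TFfor S (HrMem S σ ε v) (ltr S)) ∧
  (∀ v : S.V, TFfor S (HlMem S σ ε v) (ltl S))

/-! ### Bridges and the bridge quiver -/

/-- A weak bridge `b₁ → b₂`: a band-free string `u` (possibly of length zero) such that
`b₂ u b₁` is a string. -/
def IsWeakBridge (b₁ u b₂ : Word S) : Prop :=
  IsPrimeBand S b₁ ∧ IsPrimeBand S b₂ ∧ BandFree S u ∧ IsStr S (b₁ ++ u ++ b₂)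

/-- A bridge: a weak bridge which does not factor through another prime band. -/
def IsBridge (b₁ u b₂ : Word S) : Prop :=
  IsWeakBridge S b₁ u b₂ ∧
  ¬ ∃ (bb u₁ u₂ : Word S), IsPrimeBand S bb ∧ IsWeakBridge S b₁ u₁ bb ∧
      IsWeakBridge S bb u₂ b₂ ∧
      ((u = u₁ ++ u₂ ∧ u₁ ≠ [] ∧ u₂ ≠ []) ∨
       (∃ u₁' u₂' u₁'' u₂'' : Word S, u = u₁' ++ u₂' ∧ u₁' ≠ [] ∧ u₂' ≠ [] ∧
          u₁ = u₁' ++ u₁'' ∧ u₂ = u₂'' ++ u₂' ∧ bb = u₁'' ++ u₂''))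

/-- `R` is a set of representatives of the prime bands up to cyclic permutation. -/
def RepSet (R : Set (Word S)) : Prop :=
  (∀ r ∈ R, IsPrimeBand S r) ∧
  ∀ b, IsPrimeBand S b → ∃! r, r ∈ R ∧ IsRotation S b r

/-- One arrow of the bridge quiver with vertex set `R`. -/
def Step (R : Set (Word S)) (x y : Word S) : Prop :=
  x ∈ R ∧ y ∈ R ∧ ∃ u, IsBridge S x u y

/-- Reachability by a directed path in the bridge quiver. -/
def Reach (R : Set (Word S)) : Word S → Word S → Prop :=
  Relation.ReflTransGen (Step S R)

/-- Adjacency (in either direction) in the bridge quiver. -/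
def Adj (R : Set (Word S)) (x y : Word S) : Prop := Step S R x y ∨ Step S R y x

/-- Lying in the same connected component of the bridge quiver. -/
def SameComp (R : Set (Word S)) : Word S → Word S → Prop :=
  Relation.ReflTransGen (Adj S R)

/-- `x` lies on a meta-band, i.e. on a directed cycle of positive length in the bridge
quiver. -/
def OnMetaBand (R : Set (Word S)) (x : Word S) : Prop :=
  (∃ u, IsBridge S x u x ∧ u ≠ []) ∨
  (∃ y, y ≠ x ∧ y ∈ R ∧ Reach S R x y ∧ Reach S R y x)

/-- A meta-`⋃`-cyclic string algebra: each connected component of the bridge quiver has at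
least two vertices and is a union of meta-bands (every vertex and every arrow lies on a
directed cycle of positive length). -/
def MetaUCyclic (R : Set (Word S)) : Prop :=
  (∀ x ∈ R, ∃ y ∈ R, y ≠ x ∧ SameComp S R x y) ∧
  (∀ x ∈ R, OnMetaBand S R x) ∧
  (∀ x y u, x ∈ R → y ∈ R → IsBridge S x u y → Reach S R y x)

/-- A meta-torsion-free string algebra: each connected component of the bridge quiver has
at least two vertices, and every finite directed path of positive length extends to a
`ℤ`-indexed directed path. -/
def MetaTorsionFree (R : Set (Word S)) : Prop :=
  (∀ x ∈ R, ∃ y ∈ R, y ≠ x ∧ SameComp S R x y) ∧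
  (∀ (n : ℕ) (c e : ℕ → Word S), 0 < n → (∀ i ≤ n, c i ∈ R) →
    (∀ i < n, IsBridge S (c i) (e i) (c (i + 1))) →
    ∃ (g d : ℤ → Word S), (∀ i : ℤ, g i ∈ R) ∧
      (∀ i : ℤ, IsBridge S (g i) (d i) (g (i + 1))) ∧
      (∀ i : ℕ, i ≤ n → g (i : ℤ) = c i) ∧ (∀ i : ℕ, i < n → d (i : ℤ) = e i))

/-- A non-domestic string algebra: one with infinitely many bands. -/
def NonDomestic : Prop := ¬ {b : Word S | IsBand S b}.Finite

end SA

namespace SA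

variable {S : SAQuiver}

theorem isWalk_iff_pairs {w : Word S} :
    IsWalk S w ↔ ∀ j, (h : j + 1 < w.length) → sylTgt S (w[j]'(by omega)) = sylSrc S (w[j+1]'h) := by
  induction w with
  | nil => simp [IsWalk]
  | cons x l ih =>
    cases l with
    | nil => simp [IsWalk]
    | cons y l' =>
      rw [show IsWalk S (x :: y :: l') = (sylTgt S x = sylSrc S y ∧ IsWalk S (y :: l')) from rfl, ih]
      constructor
      · rintro ⟨h0, h⟩ j hj
        cases j with
        | zero => simpa using h0
        | succ j => exact h j (by simpa using hj)
      · intro h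
        exact ⟨by simpa using h 0 (by simp), fun j hj => h (j+1) (by simpa using hj)⟩

theorem reduced_iff_pairs {w : Word S} :
    Reduced S w ↔ ∀ j, (h : j + 1 < w.length) → (w[j+1]'h) ≠ sylInv S (w[j]'(by omega)) := by
  induction w with
  | nil => simp [Reduced]
  | cons x l ih =>
    cases l with
    | nil => simp [Reduced]
    | cons y l' =>
      rw [show Reduced S (x :: y :: l') = (y ≠ sylInv S x ∧ Reduced S (y :: l')) from rfl, ih]
      constructor
      · rintro ⟨h0, h⟩ j hj
        cases j with
        | zero => simpa using h0
        | succ j => exact h j (by simpa using hj)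
      · intro h
        exact ⟨by simpa using h 0 (by simp), fun j hj => h (j+1) (by simpa using hj)⟩

theorem getElem_infix {v s t : Word S} (n j : ℕ) (hn : n = s.length + j)
    (hj : j < v.length) (h : n < (s ++ v ++ t).length) :
    (s ++ v ++ t)[n]'h = v[j]'hj := by
  subst hn
  rw [List.getElem_append_left (by simp; omega)]
  · rw [List.getElem_append_right (by omega)]
    congr 1
    omega

theorem IsStr.infix {w v : Word S} (h : IsStr S w) (hv : v <:+: w) (hne : v ≠ []) :
    IsStr S v := by
  obtain ⟨s, t, rfl⟩ := hv
  obtain ⟨-, hwalk, hred, hav⟩ := h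
  refine ⟨hne, ?_, ?_, ?_⟩
  · rw [isWalk_iff_pairs] at hwalk ⊢
    intro j hj
    have h1 : (s.length + j) + 1 < (s ++ v ++ t).length := by simp; omega
    have := hwalk (s.length + j) h1
    rwa [getElem_infix _ j rfl (by omega), getElem_infix _ (j+1) (by omega) hj] at this
  · rw [reduced_iff_pairs] at hred ⊢
    intro j hj
    have h1 : (s.length + j) + 1 < (s ++ v ++ t).length := by simp; omega
    have := hred (s.length + j) h1
    rwa [getElem_infix _ j rfl (by omega), getElem_infix _ (j+1) (by omega) hj] at this
  · intro p hp
    obtain ⟨h1, h2⟩ := hav p hp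
    exact ⟨fun hc => h1 (hc.trans ⟨s, t, rfl⟩), fun hc => h2 (hc.trans ⟨s, t, rfl⟩)⟩

end SA
namespace SA

variable {S : SAQuiver}

theorem getElem_right {l1 l2 : Word S} (n j : ℕ) (hn : n = l1.length + j)
    (hj : j < l2.length) (h : n < (l1 ++ l2).length) : (l1 ++ l2)[n]'h = l2[j]'hj := by
  subst hn
  rw [List.getElem_append_right (by omega)]
  congr 1
  omega

theorem getElem_assoc {X Y Z : Word S} (n : ℕ) (h : n < (X ++ Y ++ Z).length) :
    (X ++ Y ++ Z)[n]'h = (X ++ (Y ++ Z))[n]'(by simpa using h) :=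
  List.getElem_of_eq (List.append_assoc X Y Z) h

theorem no_cross {X Y Z r : Word S}
    (hpure : (∀ x ∈ r, ∃ a, x = Sum.inl a) ∨ (∀ x ∈ r, ∃ a, x = Sum.inr a))
    (hmix : Mixed S Y)
    (h1 : ¬ r <:+: X ++ Y) (h2 : ¬ r <:+: Y ++ Z) : ¬ r <:+: X ++ Y ++ Z := by
  rintro ⟨s, t, heq⟩
  -- heq : s ++ r ++ t = X ++ Y ++ Z
  by_cases hs : X.length ≤ s.length
  · have hX : X <+: X ++ Y ++ Z := by
      rw [List.append_assoc]; exact List.prefix_append _ _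
    have hspre : s <+: X ++ Y ++ Z := ⟨r ++ t, by rw [← heq]; simp⟩
    obtain ⟨s', rfl⟩ := List.prefix_of_prefix_length_le hX hspre hs
    apply h2
    refine ⟨s', t, ?_⟩
    have h' : X ++ (s' ++ (r ++ t)) = X ++ (Y ++ Z) := by
      simpa [List.append_assoc] using heq
    have := List.append_cancel_left h'
    simp only [List.append_assoc]
    exact this
  · push_neg at hs
    by_cases hsr : s.length + r.length ≤ X.length + Y.length
    · have hsrpre : s ++ r <+: X ++ Y ++ Z := ⟨t, by simpa [List.append_assoc] using heq⟩
      have hXY : X ++ Y <+: X ++ Y ++ Z := List.prefix_append _ _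
      obtain ⟨t', ht'⟩ := List.prefix_of_prefix_length_le hsrpre hXY (by simp; omega)
      exact h1 ⟨s, t', ht'⟩
    · push_neg at hsr
      have hspre : s <+: X ++ Y ++ Z := ⟨r ++ t, by rw [← heq]; simp⟩
      have hX : X <+: X ++ Y ++ Z := by
        rw [List.append_assoc]; exact List.prefix_append _ _
      obtain ⟨x', rfl⟩ := List.prefix_of_prefix_length_le hspre hX hs.le
      have heq2 : r ++ t = x' ++ (Y ++ Z) := by
        have h' : s ++ (r ++ t) = s ++ (x' ++ (Y ++ Z)) := by
          simpa [List.append_assoc] using heq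
        exact List.append_cancel_left h'
      have hxY : x' ++ Y <+: r ++ t := by
        rw [heq2]
        exact ⟨Z, by simp⟩
      have hr : r <+: r ++ t := List.prefix_append _ _
      have hlen : (x' ++ Y).length ≤ r.length := by
        have : (s ++ x').length = s.length + x'.length := by simp
        simp only [List.length_append] at hsr ⊢
        omega
      obtain ⟨u2, hu2⟩ := List.prefix_of_prefix_length_le hxY hr hlen
      have hYr : Y <:+: r := ⟨x', u2, hu2⟩
      obtain ⟨⟨a1, ha1⟩, ⟨a2, ha2⟩⟩ := hmix
      rcases hpure with hp | hp
      · obtain ⟨c, hc⟩ := hp _ (hYr.subset ha2)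
        simp at hc
      · obtain ⟨c, hc⟩ := hp _ (hYr.subset ha1)
        simp at hc

theorem glue {X Y Z : Word S} (hXY : IsStr S (X ++ Y)) (hYZ : IsStr S (Y ++ Z))
    (hY : Y ≠ []) (hmix : Mixed S Y) : IsStr S (X ++ Y ++ Z) := by
  have hYlen : 0 < Y.length := List.length_pos_iff.mpr hY
  refine ⟨by simp [hY], ?_, ?_, ?_⟩
  · rw [isWalk_iff_pairs]
    intro j hj
    simp only [List.length_append] at hj
    by_cases hc : j + 1 < X.length + Y.length
    · have h1 : j + 1 < (X ++ Y).length := by simpa using hc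
      have := (isWalk_iff_pairs.mp hXY.2.1) j h1
      rwa [show (X++Y)[j]'(by omega) = (X++Y++Z)[j]'(by simp; omega) from
            (List.getElem_append_left _).symm,
        show (X++Y)[j+1]'h1 = (X++Y++Z)[j+1]'(by simp; omega) from
            (List.getElem_append_left _).symm] at this
    · have hjX : X.length ≤ j := by omega
      have h1 : (j - X.length) + 1 < (Y ++ Z).length := by simp; omega
      have := (isWalk_iff_pairs.mp hYZ.2.1) (j - X.length) h1
      rwa [getElem_assoc j, getElem_right j (j - X.length) (by omega) (by omega),
        getElem_assoc (j+1), getElem_right (j+1) (j - X.length + 1) (by omega) h1]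
  · rw [reduced_iff_pairs]
    intro j hj
    simp only [List.length_append] at hj
    by_cases hc : j + 1 < X.length + Y.length
    · have h1 : j + 1 < (X ++ Y).length := by simpa using hc
      have := (reduced_iff_pairs.mp hXY.2.2.1) j h1
      rwa [show (X++Y)[j]'(by omega) = (X++Y++Z)[j]'(by simp; omega) from
            (List.getElem_append_left _).symm,
        show (X++Y)[j+1]'h1 = (X++Y++Z)[j+1]'(by simp; omega) from
            (List.getElem_append_left _).symm] at this
    · have hjX : X.length ≤ j := by omega
      have h1 : (j - X.length) + 1 < (Y ++ Z).length := by simp; omega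
      have := (reduced_iff_pairs.mp hYZ.2.2.1) (j - X.length) h1
      rwa [getElem_assoc (j+1), getElem_right (j+1) (j - X.length + 1) (by omega) h1,
        getElem_assoc j, getElem_right j (j - X.length) (by omega) (by omega)]
  · intro p hp
    obtain ⟨ha1, hb1⟩ := hXY.2.2.2 p hp
    obtain ⟨ha2, hb2⟩ := hYZ.2.2.2 p hp
    constructor
    · refine no_cross (Or.inl ?_) hmix ha1 ha2
      intro x hx
      simp only [List.mem_map] at hx
      obtain ⟨a, -, rfl⟩ := hx
      exact ⟨a, rfl⟩
    · refine no_cross (Or.inr ?_) hmix hb1 hb2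
      intro x hx
      simp only [List.mem_reverse, List.mem_map] at hx
      obtain ⟨a, -, rfl⟩ := hx
      exact ⟨a, rfl⟩

end SA
namespace SA

variable {S : SAQuiver}

theorem infix_pair {α : Type _} {u : List α} {a b : α} (h : u <:+: [a, b]) :
    u = [] ∨ u = [a] ∨ u = [b] ∨ u = [a, b] := by
  obtain ⟨s, t, h⟩ := h
  rcases s with - | ⟨x, - | ⟨y, s⟩⟩ <;>
    rcases u with - | ⟨p, - | ⟨q, - | ⟨w, u⟩⟩⟩ <;>
      simp_all

theorem istr2_swap {e x : S.A} (h : IsStr S [Sum.inr e, Sum.inr x]) :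
    IsStr S [Sum.inl x, Sum.inl e] := by
  obtain ⟨-, hw, hred, hav⟩ := h
  have hwalk : S.tgt x = S.src e := by
    have : sylTgt S (Sum.inr e : Syl S) = sylSrc S (Sum.inr x : Syl S) := hw.1
    simpa [sylTgt, sylSrc] using this.symm
  refine ⟨by simp, ⟨by simpa [sylTgt, sylSrc] using hwalk, trivial⟩,
    ⟨by simp [sylInv], trivial⟩, ?_⟩
  intro p hp
  obtain ⟨h1, h2⟩ := hav p hp
  have hpne : p ≠ [] := by
    rintro rfl
    exact h1 (by simp)
  constructor
  · intro hin
    rcases infix_pair hin with hc | hc | hc | hc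
    · simp [hpne] at hc
    · have hpx : p = [x] := by
        rcases p with - | ⟨c, - | ⟨d, p⟩⟩ <;> simp_all
      subst hpx
      exact h2 ⟨[Sum.inr e], [], by simp⟩
    · have hpe : p = [e] := by
        rcases p with - | ⟨c, - | ⟨d, p⟩⟩ <;> simp_all
      subst hpe
      exact h2 ⟨[], [Sum.inr x], by simp⟩
    · have hpxe : p = [x, e] := by
        rcases p with - | ⟨c, - | ⟨d, - | ⟨g, p⟩⟩⟩ <;> simp_all
      subst hpxe
      exact h2 ⟨[], [], by simp⟩
  · intro hin
    have hne : (p.map (Sum.inr : S.A → Syl S)).reverse ≠ [] := by simpa using hpne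
    obtain ⟨y, hy⟩ := List.exists_mem_of_ne_nil _ hne
    have hy2 := hin.subset hy
    simp only [List.mem_reverse, List.mem_map] at hy
    obtain ⟨c, -, rfl⟩ := hy
    simp at hy2

theorem uext_dir (hSA : IsStringAlgebra S) {Q : Word S} {a a' : S.A} (hQ : Q ≠ [])
    (h1 : IsStr S (Q ++ [Sum.inl a])) (h2 : IsStr S (Q ++ [Sum.inl a'])) : a = a' := by
  obtain ⟨Q₀, d, rfl⟩ := (List.eq_nil_or_concat Q).resolve_left hQ
  have s1 : IsStr S [d, Sum.inl a] := h1.infix ⟨Q₀, [], by simp⟩ (by simp)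
  have s2 : IsStr S [d, Sum.inl a'] := h2.infix ⟨Q₀, [], by simp⟩ (by simp)
  by_contra hne
  rcases d with c | c
  · exact hSA.2.2.2.2.2.2.1 c a a' hne s1 s2
  · apply hSA.2.2.2.2.1 (S.src c)
    have r1 : a ≠ c := by
      have : (Sum.inl a : Syl S) ≠ sylInv S (Sum.inr c) := s1.2.2.1.1
      simpa [sylInv] using this
    have r2 : a' ≠ c := by
      have : (Sum.inl a' : Syl S) ≠ sylInv S (Sum.inr c) := s2.2.2.1.1
      simpa [sylInv] using this
    have w1 : S.src a = S.src c := by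
      have : sylTgt S (Sum.inr c : Syl S) = sylSrc S (Sum.inl a : Syl S) := s1.2.1.1
      simpa [sylTgt, sylSrc] using this.symm
    have w2 : S.src a' = S.src c := by
      have : sylTgt S (Sum.inr c : Syl S) = sylSrc S (Sum.inl a' : Syl S) := s2.2.1.1
      simpa [sylTgt, sylSrc] using this.symm
    exact ⟨a, a', c, hne, r2, r1, w1, w2, rfl⟩

theorem uext_inv (hSA : IsStringAlgebra S) {Q : Word S} {a a' : S.A} (hQ : Q ≠ [])
    (h1 : IsStr S (Q ++ [Sum.inr a])) (h2 : IsStr S (Q ++ [Sum.inr a'])) : a = a' := by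
  obtain ⟨Q₀, d, rfl⟩ := (List.eq_nil_or_concat Q).resolve_left hQ
  have s1 : IsStr S [d, Sum.inr a] := h1.infix ⟨Q₀, [], by simp⟩ (by simp)
  have s2 : IsStr S [d, Sum.inr a'] := h2.infix ⟨Q₀, [], by simp⟩ (by simp)
  by_contra hne
  rcases d with c | c
  · apply hSA.2.2.2.2.2.1 (S.tgt c)
    have r1 : a ≠ c := by
      have : (Sum.inr a : Syl S) ≠ sylInv S (Sum.inl c) := s1.2.2.1.1
      simpa [sylInv] using this
    have r2 : a' ≠ c := by
      have : (Sum.inr a' : Syl S) ≠ sylInv S (Sum.inl c) := s2.2.2.1.1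
      simpa [sylInv] using this
    have w1 : S.tgt a = S.tgt c := by
      have : sylTgt S (Sum.inl c : Syl S) = sylSrc S (Sum.inr a : Syl S) := s1.2.1.1
      simpa [sylTgt, sylSrc] using this.symm
    have w2 : S.tgt a' = S.tgt c := by
      have : sylTgt S (Sum.inl c : Syl S) = sylSrc S (Sum.inr a' : Syl S) := s2.2.1.1
      simpa [sylTgt, sylSrc] using this.symm
    exact ⟨a, a', c, hne, r2, r1, w1, w2, rfl⟩
  · exact hSA.2.2.2.2.2.2.2 c a a' hne (istr2_swap s1) (istr2_swap s2)

end SA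
namespace SA

variable {S : SAQuiver}

theorem length_pow (w : Word S) (n : ℕ) : (pow S w n).length = n * w.length := by
  induction n with
  | zero => simp [pow]
  | succ n ih =>
    show ((List.replicate (n+1) w).flatten).length = _
    rw [List.replicate_succ, List.flatten_cons]
    simp only [List.length_append]
    rw [show (List.replicate n w).flatten.length = (pow S w n).length from rfl, ih]
    ring

theorem pow_getElem? (w : Word S) (hw : w ≠ []) (n j : ℕ) (h : j < n * w.length) :
    (pow S w n)[j]? = w[j % w.length]? := by
  have hwl : 0 < w.length := List.length_pos_iff.mpr hw
  induction n generalizing j with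
  | zero => omega
  | succ n ih =>
    show ((List.replicate (n+1) w).flatten)[j]? = _
    rw [List.replicate_succ, List.flatten_cons]
    have hexp : (n+1) * w.length = n * w.length + w.length := by ring
    by_cases hj : j < w.length
    · rw [List.getElem?_append, if_pos hj, Nat.mod_eq_of_lt hj]
    · push_neg at hj
      rw [List.getElem?_append, if_neg (by omega)]
      have heq : (List.replicate n w).flatten = pow S w n := rfl
      rw [heq, ih (j - w.length) (by omega)]
      congr 1
      conv_rhs => rw [Nat.mod_eq_sub_mod hj]

theorem period_mul {α : Type _} (g : ℕ → α) (p : ℕ) (hp : ∀ j, g (j + p) = g j) :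
    ∀ c j, g (j + p * c) = g j := by
  intro c
  induction c with
  | zero => simp
  | succ c ih =>
    intro j
    rw [Nat.mul_succ, show j + (p * c + p) = (j + p) + p * c by omega, ih, hp]

theorem period_gcd {α : Type _} (p : ℕ) : ∀ (q : ℕ) (g : ℕ → α),
    (∀ j, g (j + p) = g j) → (∀ j, g (j + q) = g j) → ∀ j, g (j + Nat.gcd p q) = g j := by
  induction p using Nat.strong_induction_on with
  | _ p ih =>
    intro q g hp hq j
    rcases Nat.eq_zero_or_pos p with rfl | hppos
    · simpa using hq j
    · rw [Nat.gcd_rec p q]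
      refine ih (q % p) (Nat.mod_lt _ hppos) p g ?_ hp j
      intro j'
      have h1 : j' + q % p + p * (q / p) = j' + q := by
        have := Nat.mod_add_div q p
        omega
      have := period_mul g p hp (q / p) (j' + q % p)
      rw [h1] at this
      rw [← this, hq]

def SeqLt (X Y : ℕ → Syl S) : Prop :=
  ∃ j, (∀ j' < j, X j' = Y j') ∧ (∃ a, X j = Sum.inr a) ∧ (∃ a, Y j = Sum.inl a)

def SeqLe (X Y : ℕ → Syl S) : Prop := (∀ j, X j = Y j) ∨ SeqLt X Y

theorem seqLt_congr {X Y X' Y' : ℕ → Syl S} (hX : ∀ j, X j = X' j) (hY : ∀ j, Y j = Y' j)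
    (h : SeqLt X Y) : SeqLt X' Y' := by
  obtain ⟨j, h1, h2, h3⟩ := h
  exact ⟨j, fun j' hj' => by rw [← hX, ← hY]; exact h1 j' hj', by rwa [← hX], by rwa [← hY]⟩

theorem seqLt_of_seqLt_of_seqLe {X Y Z : ℕ → Syl S} (h1 : SeqLt X Y) (h2 : SeqLe Y Z) :
    SeqLt X Z := by
  rcases h2 with h2 | h2
  · exact seqLt_congr (fun _ => rfl) h2 h1
  obtain ⟨j1, e1, ⟨a1, ha1⟩, ⟨b1, hb1⟩⟩ := h1
  obtain ⟨j2, e2, ⟨a2, ha2⟩, ⟨b2, hb2⟩⟩ := h2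
  rcases lt_trichotomy j1 j2 with hlt | rfl | hgt
  · exact ⟨j1, fun j' hj' => (e1 j' hj').trans (e2 j' (by omega)), ⟨a1, ha1⟩,
      ⟨b1, by rw [← e2 j1 hlt]; exact hb1⟩⟩
  · exact ⟨j1, fun j' hj' => (e1 j' hj').trans (e2 j' hj'), ⟨a1, ha1⟩, ⟨b2, hb2⟩⟩
  · refine ⟨j2, fun j' hj' => (e1 j' (by omega)).trans (e2 j' hj'), ⟨a2, ?_⟩, ⟨b2, hb2⟩⟩
    rw [e1 j2 hgt]; exact ha2

theorem seqLt_irrefl {X : ℕ → Syl S} (h : SeqLt X X) : False := by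
  obtain ⟨j, -, ⟨a, ha⟩, ⟨b, hb⟩⟩ := h
  rw [ha] at hb
  simp at hb

end SA
open SA in
/-- If the left `ℕ`-string `⟨1 l⟩(x₀)` exists (encoded by `f : ℕ → Syl S`, read rightmost
syllable first, all of whose nonempty finite truncations are strings, which begins with
`x₀`, whose first added syllable is inverse, and which thereafter greedily prefers direct
syllables — the characterizing property of the limit of the `l`-operation), and it is
eventually periodic of the form `∞b u x₀` for a string `u` and a band `b`, then `b` is a
prime band. -/
theorem limit_band_is_prime (S : SAQuiver) (hSA : SA.IsStringAlgebra S)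
    (x₀ u b : Word S) (f : ℕ → Syl S)
    (hstr : ∀ n : ℕ, 0 < n → IsStr S (List.ofFn fun i : Fin n => f i))
    (hinit : ∀ i : ℕ, (hi : i < x₀.length) → f i = x₀.get ⟨i, hi⟩)
    (hfirst : ∃ a : S.A, f x₀.length = Sum.inr a)
    (hgreedy : ∀ n : ℕ, x₀.length < n →
      (∃ a : S.A, IsStr S ((List.ofFn fun i : Fin n => f i) ++ [Sum.inl a])) →
      ∃ a : S.A, f n = Sum.inl a)
    (hu : ∀ i : ℕ, (hi : i < u.length) → f (x₀.length + i) = u.get ⟨i, hi⟩)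
    (hb : IsBand S b)
    (hper1 : ∀ i : ℕ, (hi : i < b.length) →
      f (x₀.length + u.length + i) = b.get ⟨i, hi⟩)
    (hper : ∀ k : ℕ,
      f (x₀.length + u.length + k + b.length) = f (x₀.length + u.length + k)) :
    IsPrimeBand S b := by
  classical
  refine ⟨hb, ?_⟩
  rintro ⟨w', parts, ⟨l₁, l₂, hb12, hw12⟩, hk, hflat, hparts⟩
  have hbne : b ≠ [] := hb.1.1
  set m := b.length with hm
  have hmpos : 0 < m := List.length_pos_iff.mpr hbne
  have hw'len : w'.length = m := by rw [hw12, hm, hb12]; simp; omega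
  set N₀ := x₀.length + u.length with hN₀
  set t := l₁.length with ht
  have htm : t ≤ m := by rw [hm, hb12]; simp [ht]
  set N := N₀ + t with hN
  -- the periodic structure of f beyond N₀, in terms of b
  have hF : ∀ j, b[j % m]? = some (f (N₀ + j)) := by
    intro j
    induction j using Nat.strong_induction_on with
    | _ j ih =>
      rcases lt_or_ge j m with hj | hj
      · rw [Nat.mod_eq_of_lt hj, List.getElem?_eq_getElem (by omega)]
        have h1 := hper1 j (by omega)
        exact congrArg some h1.symm
      · have h2 := hper (j - m)
        have h4 : f (N₀ + j) = f (N₀ + (j - m)) := by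
          rw [← h2]; congr 1; omega
        rw [Nat.mod_eq_sub_mod hj, ih (j - m) (by omega), h4]
  -- the periodic structure of f beyond N, in terms of w'
  have hG : ∀ j, w'[j % m]? = some (f (N + j)) := by
    intro j
    have h1 := hF (t + j)
    have h2 : N + j = N₀ + (t + j) := by omega
    rw [h2, ← h1]
    have hjm : j % m < m := Nat.mod_lt _ hmpos
    have hadd : (t + j) % m = (t + j % m) % m := by
      conv_lhs => rw [← Nat.add_mod_mod]
    have hml : m = t + l₂.length := by rw [hm, hb12]; simp [ht]
    rcases lt_or_ge (j % m) l₂.length with hc | hc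
    · have h5 : (t + j % m) % m = t + j % m := Nat.mod_eq_of_lt (by omega)
      rw [hadd, h5, hw12, hb12]
      rw [List.getElem?_append, if_pos hc, List.getElem?_append, if_neg (by omega)]
      congr 1
      omega
    · have h5 : (t + j % m) % m = j % m - l₂.length := by
        rw [Nat.mod_eq_sub_mod (by omega), Nat.mod_eq_of_lt (by omega)]
        omega
      rw [hadd, h5, hw12, hb12]
      rw [List.getElem?_append, if_neg (by omega), List.getElem?_append, if_pos (by omega)]
  -- part bookkeeping
  set k := parts.length with hkk
  have hrot : ∀ i (hi : i < k), RotOfBand S (parts[i]'hi) := fun i hi =>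
    hparts _ (List.getElem_mem hi)
  have hplen : ∀ i (hi : i < k), 0 < (parts[i]'hi).length := by
    intro i hi
    obtain ⟨B, hB, L1, L2, hBL, hpL⟩ := hrot i hi
    have : B ≠ [] := hB.1.1
    have hBlen : 0 < B.length := List.length_pos_iff.mpr this
    rw [hpL]
    rw [hBL] at hBlen
    simp at hBlen ⊢
    omega
  set s : ℕ → ℕ := fun i => ((parts.take i).flatten).length with hs
  have hs0 : s 0 = 0 := by simp [hs]
  have hsstep : ∀ i (hi : i < k), s (i + 1) = s i + (parts[i]'hi).length := by
    intro i hi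
    simp only [hs]
    rw [List.take_succ]
    simp [List.getElem?_eq_getElem (show i < parts.length from hi)]
    rw [List.take_succ, List.sum_append]
    simp [List.getElem?_eq_getElem (show i < (List.map List.length parts).length by simpa using hi)]
  have hsk : s k = m := by
    simp only [hs, hkk, List.take_length]
    rw [← hflat, hw'len]
  have hsle : ∀ i, s i ≤ m := by
    intro i
    have h1 : parts.flatten.length = s i + ((parts.drop i).flatten).length := by
      conv_lhs => rw [← List.take_append_drop i parts]
      simp [hs]
    have h2 : parts.flatten.length = m := by rw [← hflat, hw'len]
    omega
  have hseg : ∀ i (hi : i < k) j (hj : j < (parts[i]'hi).length),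
      w'[s i + j]? = (parts[i]'hi)[j]? := by
    intro i hi j hj
    rw [hflat]
    conv_lhs => rw [← List.take_append_drop i parts, List.flatten_append]
    rw [List.getElem?_append, if_neg (by simp [hs])]
    have hdrop : parts.drop i = (parts[i]'hi) :: parts.drop (i + 1) :=
      List.drop_eq_getElem_cons hi
    rw [hdrop, List.flatten_cons, List.getElem?_append]
    rw [if_pos (by simp [hs]; omega)]
    congr 1
    simp [hs]
  -- the doubly-indexed tails
  set D : ℕ → ℕ → Syl S := fun i j => f (N + (m + (s i + j))) with hD
  have hDw : ∀ i j, w'[(s i + j) % m]? = some (D i j) := by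
    intro i j
    have h1 := hG (m + (s i + j))
    rwa [Nat.add_mod_left] at h1
  have hDpart : ∀ i (hi : i < k) j (hj : j < (parts[i]'hi).length),
      D i j = (parts[i]'hi)[j]'hj := by
    intro i hi j hj
    have h1 := hDw i j
    have h2 : s i + j < m := by
      have := hsstep i hi
      have := hsle (i + 1)
      omega
    rw [Nat.mod_eq_of_lt h2, hseg i hi j hj, List.getElem?_eq_getElem hj] at h1
    exact (Option.some.inj h1).symm
  have hDshift : ∀ i (hi : i < k) j, D i ((parts[i]'hi).length + j) = D (i + 1) j := by
    intro i hi j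
    have he := hsstep i hi
    simp only [hD]
    congr 1
    omega
  have hDk : ∀ j, D k j = D 0 j := by
    intro j
    have h1 := hDw k j
    have h2 := hDw 0 j
    rw [hsk] at h1
    rw [hs0] at h2
    rw [show (m + j) % m = (0 + j) % m by rw [Nat.add_mod_left]; simp] at h1
    rw [h2] at h1
    exact (Option.some.inj h1).symm
  -- the key greedy comparison
  have cmp : ∀ i, i < k → SeqLe (D i) (D (i + 1)) := by
    intro i hi
    by_cases hall : ∀ j, D i j = D (i + 1) j
    · exact Or.inl hall
    · push_neg at hall
      have hex : ∃ j, D i j ≠ D (i + 1) j := hall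
      set j₀ := Nat.find hex with hj₀
      have hne0 : D i j₀ ≠ D (i + 1) j₀ := Nat.find_spec hex
      have hagree : ∀ j' < j₀, D i j' = D (i + 1) j' := by
        intro j' hj'
        by_contra hc
        exact (Nat.find_min hex hj') hc
      obtain ⟨p, hpdef⟩ : ∃ p : Word S, parts[i]'hi = p := ⟨_, rfl⟩
      have hppos : 0 < p.length := hpdef ▸ hplen i hi
      have hpne : p ≠ [] := by
        intro hc; rw [hc] at hppos; simp at hppos
      have hstep : s (i + 1) = s i + p.length := hpdef ▸ hsstep i hi
      have hsle1 := hsle (i + 1)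
      set n := N + m + s (i + 1) with hn
      have hnx : x₀.length < n := by omega
      have hnp : p.length ≤ n := by omega
      have hfn : ∀ j, f (n + j) = D (i + 1) j := by
        intro j
        simp only [hD]
        congr 1
        omega
      have hfDi : ∀ x, f (N + m + s i + x) = D i x := by
        intro x
        simp only [hD]
        congr 1
        omega
      have hpget : ∀ j, j < p.length → p[j]? = some (D i j) := by
        intro j hj
        have hj' : j < (parts[i]'hi).length := by rw [hpdef]; exact hj
        rw [← hpdef, List.getElem?_eq_getElem hj']
        exact congrArg some (hDpart i hi j hj').symm
      have hDi_shift : ∀ j, D i (p.length + j) = D (i + 1) j := by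
        intro j
        have h5 := hDshift i hi j
        rw [hpdef] at h5
        exact h5
      -- band data for p
      obtain ⟨B, hB, L1, L2, hBL, hpL0⟩ := hrot i hi
      have hpL : p = L2 ++ L1 := hpdef ▸ hpL0
      have hBne : B ≠ [] := hB.1.1
      have hmixB : Mixed S B := by
        obtain ⟨a1, ha1⟩ := hB.2.2.2.1
        obtain ⟨a2, ha2⟩ := hB.2.2.2.2.1
        exact ⟨⟨a2, List.mem_of_mem_getLast? (by rw [ha2]; rfl)⟩,
          ⟨a1, List.mem_of_mem_head? (by rw [ha1]; rfl)⟩⟩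
      have hmixp : Mixed S p := by
        obtain ⟨⟨a1, ha1⟩, ⟨a2, ha2⟩⟩ := hmixB
        rw [hBL] at ha1 ha2
        simp only [List.mem_append] at ha1 ha2
        refine ⟨⟨a1, ?_⟩, ⟨a2, ?_⟩⟩ <;> rw [hpL] <;> simp only [List.mem_append] <;> tauto
      have hstr_pp : IsStr S (p ++ p) := by
        have h3 : IsStr S (pow S B 3) := hB.2.2.2.2.2 3 (by omega)
        refine h3.infix ⟨L1, L2, ?_⟩ (by simp [hpne])
        show L1 ++ (p ++ p) ++ L2 = (List.replicate 3 B).flatten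
        rw [hBL, hpL]
        simp [List.replicate_succ, List.append_assoc]
      -- prefix bookkeeping
      set Pref : ℕ → Word S := fun z => List.ofFn fun idx : Fin z => f ↑idx with hPrefd
      have hPreflen : ∀ z, (Pref z).length = z := by intro z; simp [hPrefd]
      have hPg : ∀ z j, j < z → (Pref z)[j]? = some (f j) := by
        intro z j hj
        simp only [hPrefd]
        rw [List.getElem?_ofFn]
        simp [List.ofFnNthVal, hj]
      have hsplit : Pref n = Pref (n - p.length) ++ p := by
        apply List.ext_getElem?
        intro j
        rcases lt_or_ge j (n - p.length) with hj | hj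
        · rw [hPg n j (by omega), List.getElem?_append, if_pos (by rw [hPreflen]; omega),
            hPg _ j hj]
        · rcases lt_or_ge j n with hj2 | hj2
          · rw [hPg n j hj2, List.getElem?_append, if_neg (by rw [hPreflen]; omega), hPreflen,
              hpget (j - (n - p.length)) (by omega)]
            have h6 := hfDi (j - (n - p.length))
            rw [show N + m + s i + (j - (n - p.length)) = j by omega] at h6
            rw [h6]
          · rw [List.getElem?_eq_none (by rw [hPreflen]; omega),
              List.getElem?_eq_none (by simp [hPreflen]; omega)]
      set Seg : Word S := List.ofFn fun idx : Fin (j₀ + 1) => f (n + ↑idx) with hSegd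
      have hSeglen : Seg.length = j₀ + 1 := by simp [hSegd]
      have hSg : ∀ j, j < j₀ + 1 → Seg[j]? = some (f (n + j)) := by
        intro j hj
        simp only [hSegd]
        rw [List.getElem?_ofFn]
        simp [List.ofFnNthVal, hj]
      have hPrefSeg : Pref (n + (j₀ + 1)) = Pref n ++ Seg := by
        apply List.ext_getElem?
        intro j
        rcases lt_or_ge j n with hj | hj
        · rw [hPg _ j (by omega), List.getElem?_append, if_pos (by rw [hPreflen]; omega),
            hPg n j hj]
        · rcases lt_or_ge j (n + (j₀ + 1)) with hj2 | hj2
          · rw [hPg _ j hj2, List.getElem?_append, if_neg (by rw [hPreflen]; omega), hPreflen,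
              hSg (j - n) (by omega)]
            congr 2
            omega
          · rw [List.getElem?_eq_none (by rw [hPreflen]; omega),
              List.getElem?_eq_none (by simp [hPreflen, hSeglen]; omega)]
      have hpseg : IsStr S (p ++ Seg) := by
        have h1 : IsStr S (Pref (n + (j₀ + 1))) := hstr _ (by omega)
        have h2 : Pref (n + (j₀ + 1)) = Pref (n - p.length) ++ (p ++ Seg) := by
          rw [hPrefSeg, hsplit, List.append_assoc]
        rw [h2] at h1
        exact h1.infix ⟨Pref (n - p.length), [], by simp⟩ (by simp [hpne])
      have hppseg : IsStr S (p ++ p ++ Seg) := glue hstr_pp hpseg hpne hmixp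
      have hbig : IsStr S (Pref n ++ (p ++ Seg)) := by
        have h1 := glue (X := Pref (n - p.length)) (Y := p) (Z := p ++ Seg)
          (by rw [← hsplit]; exact hstr n (by omega))
          (by rw [← List.append_assoc]; exact hppseg) hpne hmixp
        rw [hsplit]
        exact h1
      have hDval : ∀ x : ℕ, x ≤ j₀ → (p ++ Seg)[x]? = some (D i x) := by
        intro x hx
        rcases lt_or_ge x p.length with hxp | hxp
        · rw [List.getElem?_append, if_pos hxp, hpget x hxp]
        · rw [List.getElem?_append, if_neg (by omega), hSg _ (by omega), hfn (x - p.length)]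
          have h5 := hDi_shift (x - p.length)
          rw [show p.length + (x - p.length) = x by omega] at h5
          rw [h5]
      have hWeq : Pref (n + j₀) ++ [D i j₀] = (Pref n ++ (p ++ Seg)).take (n + j₀ + 1) := by
        apply List.ext_getElem?
        intro j
        rcases lt_or_ge j (n + j₀ + 1) with hj | hj
        · rw [List.getElem?_take, if_pos hj]
          rcases lt_or_ge j n with hjn | hjn
          · rw [List.getElem?_append, if_pos (by rw [hPreflen]; omega), hPg _ j (by omega),
              List.getElem?_append, if_pos (by rw [hPreflen]; omega), hPg n j hjn]
          · rw [List.getElem?_append (l₁ := Pref n), if_neg (by rw [hPreflen]; omega), hPreflen,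
              hDval (j - n) (by omega)]
            rcases lt_or_ge j (n + j₀) with hjlt | hjge
            · rw [List.getElem?_append, if_pos (by rw [hPreflen]; omega), hPg _ j hjlt]
              have h6 := hfn (j - n)
              rw [show n + (j - n) = j by omega] at h6
              rw [h6]
              exact congrArg some (hagree (j - n) (by omega)).symm
            · have hje : j = n + j₀ := by omega
              subst hje
              rw [List.getElem?_append, if_neg (by rw [hPreflen]; omega), hPreflen,
                show n + j₀ - (n + j₀) = 0 by omega]
              rw [show n + j₀ - n = j₀ by omega]
              simp
        · rw [List.getElem?_take, if_neg (by omega),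
            List.getElem?_eq_none (by simp [hPreflen]; omega)]
      have hW : IsStr S (Pref (n + j₀) ++ [D i j₀]) := by
        refine hbig.infix ?_ (by simp)
        rw [hWeq]
        exact (List.take_prefix _ _).isInfix
      have hPrefsucc : Pref (n + j₀ + 1) = Pref (n + j₀) ++ [f (n + j₀)] := by
        apply List.ext_getElem?
        intro j
        rcases lt_or_ge j (n + j₀) with hj | hj
        · rw [hPg _ j (by omega), List.getElem?_append, if_pos (by rw [hPreflen]; omega),
            hPg _ j hj]
        · rcases lt_or_ge j (n + j₀ + 1) with hj2 | hj2
          · have hje : j = n + j₀ := by omega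
            subst hje
            rw [hPg _ _ (by omega), List.getElem?_append, if_neg (by rw [hPreflen]; omega),
              hPreflen]
            simp
          · rw [List.getElem?_eq_none (by rw [hPreflen]; omega),
              List.getElem?_eq_none (by simp [hPreflen]; omega)]
      have hact : IsStr S (Pref (n + j₀) ++ [f (n + j₀)]) := by
        rw [← hPrefsucc]
        exact hstr _ (by omega)
      have hPne : Pref (n + j₀) ≠ [] := by
        intro hc
        have h7 := congrArg List.length hc
        rw [hPreflen] at h7
        simp at h7
        omega
      rcases hDi : D i j₀ with a | a
      · exfalso
        have hWa : IsStr S ((List.ofFn fun idx : Fin (n + j₀) => f ↑idx) ++ [Sum.inl a]) := by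
          have h8 := hW
          rw [hDi] at h8
          exact h8
        obtain ⟨a', ha'⟩ := hgreedy (n + j₀) (by omega) ⟨a, hWa⟩
        have hact' : IsStr S (Pref (n + j₀) ++ [Sum.inl a']) := by
          rw [← ha']
          exact hact
        have heq := uext_dir hSA hPne hWa hact'
        apply hne0
        rw [hDi, ← hfn j₀, ha', heq]
      · rcases hDi1 : D (i + 1) j₀ with a' | a'
        · exact Or.inr ⟨j₀, hagree, ⟨a, hDi⟩, ⟨a', hDi1⟩⟩
        · exfalso
          have hWa : IsStr S (Pref (n + j₀) ++ [Sum.inr a]) := by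
            rw [← hDi]
            exact hW
          have hact' : IsStr S (Pref (n + j₀) ++ [Sum.inr a']) := by
            rw [← hDi1, ← hfn j₀]
            exact hact
          have heq := uext_inv hSA hPne hWa hact'
          exact hne0 (by rw [hDi, hDi1, heq])
  -- if no strict comparison: periodicity contradiction
  by_cases hper0 : ∀ j, D 0 j = D 1 j
  · exfalso
    have hs1 := hsstep 0 (by omega)
    have hs2 := hsstep 1 (by omega)
    set per := s 1 with hper'
    have hperpos : 0 < per := by have := hplen 0 (by omega); omega
    have hperlt : per < m := by
      have := hplen 1 (by omega)
      have := hsle (1+1)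
      omega
    have hDper : ∀ j, D 0 (j + per) = D 0 j := by
      intro j
      have h1 : D 0 (j + per) = D 1 j := by
        simp only [hD]; congr 1; omega
      rw [h1, ← hper0 j]
    have hDm : ∀ j, D 0 (j + m) = D 0 j := by
      intro j
      have h1 := hDw 0 (j + m)
      have h2 := hDw 0 j
      rw [show (s 0 + (j + m)) % m = (s 0 + j) % m by
        rw [← Nat.add_assoc, Nat.add_mod_right], h2] at h1
      exact (Option.some.inj h1).symm
    set d := Nat.gcd per m with hd
    have hdper : ∀ j, D 0 (j + d) = D 0 j := period_gcd per m (D 0) hDper hDm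
    have hdpos : 0 < d := Nat.gcd_pos_of_pos_left _ hperpos
    have hddvd : d ∣ m := Nat.gcd_dvd_right per m
    have hdlt : d < m := lt_of_le_of_lt (Nat.gcd_le_left _ hperpos) hperlt
    have hFm : ∀ j, f (N₀ + (j + m)) = f (N₀ + j) := by
      intro j
      have h1 := hF (j + m)
      have h2 := hF j
      rw [Nat.add_mod_right, h2] at h1
      exact (Option.some.inj h1).symm
    have hFg : ∀ x, D 0 x = f (N₀ + (t + m + x)) := by
      intro x
      simp only [hD]; congr 1; omega
    have argeq : ∀ {x y : ℕ}, x = y → f (N₀ + x) = f (N₀ + y) := by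
      intro x y h; rw [h]
    have hFd : ∀ j, f (N₀ + (j + d)) = f (N₀ + j) := by
      intro j
      calc f (N₀ + (j + d)) = f (N₀ + (j + d + m)) := (hFm (j + d)).symm
        _ = f (N₀ + (j + d + m + m)) := (hFm (j + d + m)).symm
        _ = f (N₀ + (t + m + (j + m - t + d))) := argeq (by omega)
        _ = D 0 (j + m - t + d) := (hFg _).symm
        _ = D 0 (j + m - t) := hdper _
        _ = f (N₀ + (t + m + (j + m - t))) := hFg _
        _ = f (N₀ + (j + m + m)) := argeq (by omega)
        _ = f (N₀ + (j + m)) := hFm (j + m)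
        _ = f (N₀ + j) := hFm j
    have hFmod : ∀ j, f (N₀ + j) = f (N₀ + (j % d)) := by
      intro j
      induction j using Nat.strong_induction_on with
      | _ j ih =>
        rcases lt_or_ge j d with hj | hj
        · rw [Nat.mod_eq_of_lt hj]
        · have e1 : f (N₀ + j) = f (N₀ + (j - d)) := by
            have h3 := hFd (j - d)
            rw [show j - d + d = j by omega] at h3
            exact h3
          rw [e1, ih (j - d) (by omega), Nat.mod_eq_sub_mod hj]
    have htake_len : (b.take d).length = d := by
      simp only [List.length_take]
      omega
    have htake_ne : b.take d ≠ [] := by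
      intro hc
      have := congrArg List.length hc
      rw [htake_len] at this
      simp at this
      omega
    have hmd : m / d * d = m := Nat.div_mul_cancel hddvd
    have hpowlen : (pow S (b.take d) (m / d)).length = m := by
      rw [length_pow, htake_len, Nat.div_mul_cancel hddvd]
    have hbp : b = pow S (b.take d) (m / d) := by
      apply List.ext_getElem?
      intro j
      rcases lt_or_ge j m with hj | hj
      · have e1 : b[j]? = some (f (N₀ + j)) := by
          have h4 := hF j; rwa [Nat.mod_eq_of_lt hj] at h4
        have hjd : j % d < d := Nat.mod_lt _ hdpos
        have e2 : b[j % d]? = some (f (N₀ + (j % d))) := by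
          have h4 := hF (j % d)
          rwa [Nat.mod_eq_of_lt (by omega)] at h4
        rw [e1, pow_getElem? _ htake_ne _ _ (by rw [htake_len]; omega), htake_len]
        rw [List.getElem?_take, if_pos hjd, e2, hFmod j]
      · rw [List.getElem?_eq_none (by omega), List.getElem?_eq_none (by rw [hpowlen]; omega)]
    have hprim : ¬ ∃ (v : Word S) (kk : ℕ), 2 ≤ kk ∧ b = pow S v kk := hb.2.2.1
    apply hprim
    refine ⟨b.take d, m / d, ?_, hbp⟩
    have h0 : m / d ≠ 0 := by
      intro hc
      rw [hc] at hmd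
      simp at hmd
      omega
    have h1 : m / d ≠ 1 := by
      intro hc
      rw [hc] at hmd
      simp at hmd
      omega
    exact (Nat.two_le_iff _).mpr ⟨h0, h1⟩
  · have h01 : SeqLt (D 0) (D 1) := (cmp 0 (by omega)).resolve_left hper0
    have hchain : ∀ i, 1 ≤ i → i ≤ k → SeqLt (D 0) (D i) := by
      intro i
      induction i with
      | zero => omega
      | succ i ih =>
        intro h1 h2
        rcases Nat.eq_zero_or_pos i with rfl | hipos
        · exact h01
        · exact seqLt_of_seqLt_of_seqLe (ih (by omega) (by omega)) (cmp i (by omega))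
    have hk0 : SeqLt (D 0) (D k) := hchain k (by omega) le_rfl
    exact seqLt_irrefl (seqLt_of_seqLt_of_seqLe hk0 (Or.inl hDk))
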